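/- For a set A of n ≥ 2 distinct positive reals a_1 < ... < a_n, construct the 4n planar points x_{kn+i} = R^k·(a_i, 1) for 0 ≤ k ≤ 3 and 1 ≤ i ≤ n, where R is rotation by π/2. Then for each j, the number of indices k ≠ j with ⟨x_j, x_k⟩ ≤ 0 equals 2n+1; hence the unnormalized spherical depth of the origin with respect to this point set equals 4n² + 2n. -/

import Mathlib

open scoped RealInnerProductSpace Classical

/-- Rotation of the plane by π/2. -/
noncomputable def rotQuarter (x : EuclideanSpace ℝ (Fin 2)) :
    EuclideanSpace ℝ (Fin 2) :=
  (WithLp.equiv 2 (Fin 2 → ℝ)).symm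
    ![-(WithLp.equiv 2 (Fin 2 → ℝ) x 1), WithLp.equiv 2 (Fin 2 → ℝ) x 0]

private lemma pair_cases' {α : Type*} [DecidableEq α] {a b u v : α} (hab : a ≠ b)
    (h : ({a, b} : Finset α) = {u, v}) : (a = u ∧ b = v) ∨ (a = v ∧ b = u) := by
  have ha : a ∈ ({u, v} : Finset α) := h ▸ by simp
  have hb : b ∈ ({u, v} : Finset α) := h ▸ by simp
  simp only [Finset.mem_insert, Finset.mem_singleton] at ha hb
  rcases ha with rfl | rfl <;> rcases hb with rfl | rfl <;> tauto

private lemma inner_x_key {n : ℕ} (a : Fin n → ℝ)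
    (x : Fin 4 × Fin n → EuclideanSpace ℝ (Fin 2))
    (hx : ∀ p : Fin 4 × Fin n,
      x p = rotQuarter^[(p.1 : ℕ)] ((WithLp.equiv 2 (Fin 2 → ℝ)).symm ![a p.2, 1]))
    (k l : Fin 4) (i m : Fin n) :
    ⟪x (k, i), x (l, m)⟫ =
      if l - k = 0 then a i * a m + 1 else if l - k = 1 then a m - a i
      else if l - k = 2 then -(a i * a m + 1) else a i - a m := by
  fin_cases k <;> fin_cases l <;>
    simp (config := { decide := true }) [hx, rotQuarter, show ((3 : Fin 4) : ℕ) = 3 from rfl,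
      PiLp.inner_apply, RCLike.inner_apply, Fin.sum_univ_two, Function.iterate_succ,
      WithLp.equiv_symm_apply, PiLp.toLp_apply, WithLp.equiv_apply] <;> ring

theorem spherical_depth_lower_bound_construction
    (n : ℕ) (hn : 2 ≤ n) (a : Fin n → ℝ) (hpos : ∀ i, 0 < a i)
    (hinj : Function.Injective a)
    (x : Fin 4 × Fin n → EuclideanSpace ℝ (Fin 2))
    (hx : ∀ p : Fin 4 × Fin n,
      x p = rotQuarter^[(p.1 : ℕ)] ((WithLp.equiv 2 (Fin 2 → ℝ)).symm ![a p.2, 1])) :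
    (∀ j : Fin 4 × Fin n,
        (Finset.univ.filter (fun k => k ≠ j ∧ ⟪x j, x k⟫ ≤ 0)).card = 2 * n + 1) ∧
      ((Finset.univ.powersetCard 2).filter
          (fun P : Finset (Fin 4 × Fin n) =>
            ∃ j ∈ P, ∃ k ∈ P, j ≠ k ∧ ⟪x j, x k⟫ ≤ 0)).card = 4 * n ^ 2 + 2 * n := by
  have key := inner_x_key a x hx
  have hpos2 : ∀ i m : Fin n, (0 : ℝ) < a i * a m + 1 := fun i m => by
    have := hpos i; have := hpos m; nlinarith
  -- first part
  have hcount : ∀ j : Fin 4 × Fin n,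
      (Finset.univ.filter (fun k => k ≠ j ∧ ⟪x j, x k⟫ ≤ 0)).card = 2 * n + 1 := by
    rintro ⟨k, i⟩
    rw [Finset.card_filter, Fintype.sum_prod_type]
    have hre : ∀ g : Fin 4 → ℕ, ∑ l, g l = g (k + 0) + g (k + 1) + g (k + 2) + g (k + 3) := by
      intro g
      rw [← Fintype.sum_equiv (Equiv.addLeft k) (fun d => g (k + d)) g (fun d => rfl),
        Fin.sum_univ_four]
    rw [hre]
    have hne1 : (k + 1 : Fin 4) ≠ k := by omega
    have hne2 : (k + 2 : Fin 4) ≠ k := by omega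
    have hne3 : (k + 3 : Fin 4) ≠ k := by omega
    have t0 : ∑ m : Fin n,
        (if ((k + 0, m) : Fin 4 × Fin n) ≠ (k, i) ∧ ⟪x (k, i), x (k + 0, m)⟫ ≤ 0 then 1 else 0)
        = 0 := by
      apply Finset.sum_eq_zero
      intro m _
      rw [if_neg]
      rintro ⟨-, hle⟩
      rw [key] at hle
      simp only [add_sub_cancel_left, if_pos rfl] at hle
      exact absurd hle (not_le.2 (hpos2 i m))
    have t1 : ∑ m : Fin n,
        (if ((k + 1, m) : Fin 4 × Fin n) ≠ (k, i) ∧ ⟪x (k, i), x (k + 1, m)⟫ ≤ 0 then 1 else 0)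
        = (Finset.univ.filter (fun m => a m ≤ a i)).card := by
      rw [Finset.card_filter]
      apply Finset.sum_congr rfl
      intro m _
      congr 1
      rw [key]
      simp (config := { decide := true }) only [add_sub_cancel_left, Prod.ext_iff,
        if_true, if_false]
      simp [hne1, sub_nonpos]
    have t2 : ∑ m : Fin n,
        (if ((k + 2, m) : Fin 4 × Fin n) ≠ (k, i) ∧ ⟪x (k, i), x (k + 2, m)⟫ ≤ 0 then 1 else 0)
        = n := by
      have h1 : ∀ m : Fin n,
          (if ((k + 2, m) : Fin 4 × Fin n) ≠ (k, i) ∧ ⟪x (k, i), x (k + 2, m)⟫ ≤ 0 then 1 else 0)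
          = 1 := by
        intro m
        rw [if_pos]
        refine ⟨by simp [Prod.ext_iff, hne2], ?_⟩
        rw [key]
        simp (config := { decide := true }) only [add_sub_cancel_left, if_true, if_false]
        have := hpos2 i m; linarith
      simp only [h1, Finset.sum_const, Finset.card_univ, Fintype.card_fin, smul_eq_mul, mul_one]
    have t3 : ∑ m : Fin n,
        (if ((k + 3, m) : Fin 4 × Fin n) ≠ (k, i) ∧ ⟪x (k, i), x (k + 3, m)⟫ ≤ 0 then 1 else 0)
        = (Finset.univ.filter (fun m => a i ≤ a m)).card := by
      rw [Finset.card_filter]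
      apply Finset.sum_congr rfl
      intro m _
      congr 1
      rw [key]
      simp (config := { decide := true }) only [add_sub_cancel_left, Prod.ext_iff,
        if_true, if_false]
      simp [hne3, sub_nonpos]
    rw [t0, t1, t2, t3]
    have hAB : (Finset.univ.filter (fun m => a m ≤ a i)).card
        + (Finset.univ.filter (fun m => a i ≤ a m)).card = n + 1 := by
      rw [← Finset.card_union_add_card_inter]
      have hu : (Finset.univ.filter (fun m => a m ≤ a i))
          ∪ (Finset.univ.filter (fun m => a i ≤ a m)) = Finset.univ := by
        ext m; simp [le_total]
      have hI : (Finset.univ.filter (fun m => a m ≤ a i))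
          ∩ (Finset.univ.filter (fun m => a i ≤ a m)) = {i} := by
        ext m
        simp only [Finset.mem_inter, Finset.mem_filter, Finset.mem_univ, true_and,
          Finset.mem_singleton]
        constructor
        · rintro ⟨h1, h2⟩; exact hinj (le_antisymm h1 h2)
        · rintro rfl; exact ⟨le_refl _, le_refl _⟩
      rw [hu, hI]
      simp
    omega
  refine ⟨hcount, ?_⟩
  -- second part
  set S : Finset ((Fin 4 × Fin n) × (Fin 4 × Fin n)) :=
    Finset.univ.filter (fun p => p.2 ≠ p.1 ∧ ⟪x p.1, x p.2⟫ ≤ 0) with hS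
  have hScard : S.card = 4 * n * (2 * n + 1) := by
    rw [hS, Finset.card_filter, Fintype.sum_prod_type]
    have h1 : ∀ j : Fin 4 × Fin n,
        (∑ k : Fin 4 × Fin n, if k ≠ j ∧ ⟪x j, x k⟫ ≤ 0 then 1 else 0) = 2 * n + 1 := by
      intro j
      rw [← Finset.card_filter]
      exact hcount j
    simp only [h1, Finset.sum_const, Finset.card_univ, Fintype.card_prod, Fintype.card_fin,
      smul_eq_mul, mul_one]
  set T := (((Finset.univ : Finset (Fin 4 × Fin n)).powersetCard 2)).filter
      (fun P : Finset (Fin 4 × Fin n) =>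
        ∃ j ∈ P, ∃ k ∈ P, j ≠ k ∧ ⟪x j, x k⟫ ≤ 0) with hT
  have hmap : ∀ p ∈ S, ({p.1, p.2} : Finset (Fin 4 × Fin n)) ∈ T := by
    rintro ⟨u, v⟩ hp
    rw [hS, Finset.mem_filter] at hp
    obtain ⟨-, hne, hle⟩ := hp
    rw [hT, Finset.mem_filter, Finset.mem_powersetCard]
    exact ⟨⟨Finset.subset_univ _, Finset.card_pair hne.symm⟩, u, by simp, v, by simp,
      hne.symm, hle⟩
  have hfiber : ∀ P ∈ T, (S.filter (fun p => ({p.1, p.2} : Finset (Fin 4 × Fin n)) = P)).card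
      = 2 := by
    intro P hP
    rw [hT, Finset.mem_filter, Finset.mem_powersetCard] at hP
    obtain ⟨⟨-, hc2⟩, j, hj, k, hk, hjk, hle⟩ := hP
    have hle' : ⟪x k, x j⟫ ≤ 0 := by rwa [real_inner_comm]
    have hPjk : P = {j, k} := by
      symm
      apply Finset.eq_of_subset_of_card_le
      · intro z hz
        simp only [Finset.mem_insert, Finset.mem_singleton] at hz
        rcases hz with rfl | rfl <;> assumption
      · rw [hc2, Finset.card_pair hjk]
    have heq : S.filter (fun p => ({p.1, p.2} : Finset (Fin 4 × Fin n)) = P)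
        = {(j, k), (k, j)} := by
      ext ⟨u, v⟩
      simp only [Finset.mem_filter, hS, Finset.mem_univ, true_and, Finset.mem_insert,
        Finset.mem_singleton, Prod.mk.injEq]
      constructor
      · rintro ⟨⟨hne, hl⟩, hpair⟩
        rw [hPjk] at hpair
        rcases pair_cases' hne.symm hpair with ⟨rfl, rfl⟩ | ⟨rfl, rfl⟩ <;> tauto
      · rintro (⟨rfl, rfl⟩ | ⟨rfl, rfl⟩)
        · exact ⟨⟨hjk.symm, hle⟩, by rw [hPjk]⟩
        · refine ⟨⟨hjk, hle'⟩, ?_⟩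
          rw [hPjk]
          exact Finset.pair_comm _ _
    rw [heq, Finset.card_insert_of_notMem, Finset.card_singleton]
    simp only [Finset.mem_singleton, Prod.mk.injEq, not_and]
    intro h; exact absurd h hjk
  have hdouble : S.card = 2 * T.card := by
    rw [Finset.card_eq_sum_card_fiberwise hmap, Finset.sum_congr rfl hfiber,
      Finset.sum_const, smul_eq_mul, mul_comm]
  rw [hScard] at hdouble
  have h2 : 2 * (4 * n ^ 2 + 2 * n) = 2 * T.card := by rw [← hdouble]; ring
  omega
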